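/- (Theorem 1, upper bound form.) Assume no two ghost positions are consecutive, i.e. ι k + 1 < ι (k+1) for all k with k + 1 ≤ m − 1. Then for every v : ℝ and every w : ℕ → ℝ there exists a multivariate polynomial p : MvPolynomial (Fin (n+m)) ℝ with total degree at most 2*m + 1 such that for every choice of input bits b : ℕ → ℤ with b k ∈ {0,1} for all k and every c implementing the m-plus-bits interface for b, one has v + ∑_{i=1}^{n} w i * (φ* i : ℝ) = MvPolynomial.eval (fun t : Fin (n+m) => ((φ (t + 1)) : ℝ)) p. (That is, the argument of the sign function in the APUF response model is, as a function of the observable feature vector (φ(1),...,φ(n+m)), given by a polynomial of order at most 2m+1.) -/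

import Mathlib

/-- `c` implements the `m`-plus-bits challenge interface for input bits `b`,
with ghost-bit positions `ι 0 < ι 1 < ... < ι (m-1)`, for an `n`-stage PUF. -/
def MPlusBitsInterface (n m : ℕ) (hm : 1 ≤ m) (ι : Fin m → ℕ)
    (b c : ℕ → ℤ) : Prop :=
  (∀ i, 1 ≤ i → i < ι ⟨0, hm⟩ → c i = b i) ∧
  (∀ k (hk : k + 1 ≤ m - 1), ∀ i,
    ι ⟨k, by omega⟩ < i → i < ι ⟨k + 1, by omega⟩ → c (i - (k + 1)) = b i) ∧
  (∀ i, ι ⟨m - 1, by omega⟩ < i → i ≤ n + m → c (i - m) = b i)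

/-!
Hidden bit `c j` is the input bit `b` at the `j`-th non-ghost position `p j`, so `φ* i` is the
product of the spins `s k = 2 b k - 1` over the non-ghost positions `k ≥ p i`. As every spin is
`±1`, multiplying in the spins of the ghosts `g ≥ p i` twice gives `φ* i = φ (p i) * ∏ s g`, and
`s g = φ g * φ (g + 1)`. Hence each `φ* i` is a monomial of degree at most `2 m + 1` in the
observable features.
-/

namespace MPlusBits

open Finset MvPolynomial

def spin (b : ℕ → ℤ) (k : ℕ) : ℤ := 2 * b k - 1

-- With `N = n + m` this is the paper's `φ`; for `c` and `N = n`, its `φ*`.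
def feature (b : ℕ → ℤ) (N a : ℕ) : ℤ := ∏ k ∈ Icc a N, spin b k

section Spins

variable {b : ℕ → ℤ}

lemma prod_spin_mul_self (hb : ∀ k, b k = 0 ∨ b k = 1) (s : Finset ℕ) :
    (∏ k ∈ s, spin b k) * ∏ k ∈ s, spin b k = 1 := by
  rw [← prod_mul_distrib]
  refine prod_eq_one fun k _ => ?_
  rcases hb k with h | h <;> simp [spin, h]

lemma feature_eq_spin_mul {N a : ℕ} (ha : a ≤ N) :
    feature b N a = spin b a * feature b N (a + 1) := by
  rw [feature, ← insert_Icc_add_one_left_eq_Icc ha, prod_insert (by simp), feature]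

lemma spin_eq_feature_mul_feature (hb : ∀ k, b k = 0 ∨ b k = 1) {N a : ℕ} (ha : a ≤ N) :
    spin b a = feature b N a * feature b N (a + 1) := by
  rw [feature_eq_spin_mul ha, mul_assoc, feature, prod_spin_mul_self hb, mul_one]

lemma prod_spin_Icc_sdiff (hb : ∀ k, b k = 0 ∨ b k = 1) (N a : ℕ) (S : Finset ℕ) :
    ∏ k ∈ Icc a N \ S, spin b k = feature b N a * ∏ k ∈ S with k ∈ Icc a N, spin b k := by
  have hsub : {k ∈ S | k ∈ Icc a N} ⊆ Icc a N := fun k hk => (mem_filter.1 hk).2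
  have hsdiff : Icc a N \ S = Icc a N \ {k ∈ S | k ∈ Icc a N} := by
    ext k; simp only [mem_sdiff, mem_filter]; tauto
  rw [feature, ← prod_sdiff hsub, hsdiff, mul_assoc, prod_spin_mul_self hb, mul_one]

end Spins

section Ghosts

open Nat

variable {m : ℕ} {ι : Fin m → ℕ}

def ghosts (ι : Fin m → ℕ) : Finset ℕ := univ.image ι

def ghostsBelow (ι : Fin m → ℕ) (p : ℕ) : Finset (Fin m) := {k | ι k < p}

-- The `j`-th position (counting from `0`) that is not a ghost; it carries hidden bit `j`.
noncomputable def nonGhostPos (ι : Fin m → ℕ) (j : ℕ) : ℕ := nth (· ∉ ghosts ι) j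

lemma card_ghostsBelow_le (p : ℕ) : #(ghostsBelow ι p) ≤ m :=
  (card_filter_le _ _).trans_eq (card_fin m)

lemma lt_iff_lt_card_ghostsBelow (hι : Monotone ι) (p : ℕ) (k : Fin m) :
    ι k < p ↔ (k : ℕ) < #(ghostsBelow ι p) := by
  constructor
  · intro hk
    have hsub : Iic k ⊆ ghostsBelow ι p := fun j hj =>
      mem_filter.2 ⟨mem_univ j, (hι (mem_Iic.1 hj)).trans_lt hk⟩
    simpa using card_le_card hsub
  · intro hk
    by_contra! hk'
    have hsub : ghostsBelow ι p ⊆ Iio k := fun j hj => by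
      rw [mem_Iio]
      by_contra! hkj
      exact absurd (hk'.trans (hι hkj)) (not_le.2 (mem_filter.1 hj).2)
    simpa using (card_le_card hsub).trans_lt' hk

lemma count_notMem_ghosts_add_card (hι : Function.Injective ι) (p : ℕ) :
    count (· ∉ ghosts ι) p + #(ghostsBelow ι p) = p := by
  have himage : {x ∈ range p | x ∈ ghosts ι} = (ghostsBelow ι p).image ι := by
    ext x
    simp only [ghosts, ghostsBelow, mem_filter, mem_range, mem_image, mem_univ, true_and]
    constructor
    · rintro ⟨hx, k, rfl⟩
      exact ⟨k, hx, rfl⟩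
    · rintro ⟨k, hk, rfl⟩
      exact ⟨hk, k, rfl⟩
  rw [count_eq_card_filter_range, ← card_image_of_injective _ hι, ← himage,
    add_comm, card_filter_add_card_filter_not, card_range]

lemma nonGhostPos_strictMono : StrictMono (nonGhostPos ι) :=
  nth_strictMono (ghosts ι).finite_toSet.infinite_compl

lemma nonGhostPos_notMem_ghosts (j : ℕ) : nonGhostPos ι j ∉ ghosts ι :=
  nth_mem_of_infinite (ghosts ι).finite_toSet.infinite_compl j

lemma count_nonGhostPos (j : ℕ) : count (· ∉ ghosts ι) (nonGhostPos ι j) = j :=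
  count_nth_of_infinite (ghosts ι).finite_toSet.infinite_compl j

lemma nonGhostPos_count {x : ℕ} (hx : x ∉ ghosts ι) :
    nonGhostPos ι (count (· ∉ ghosts ι) x) = x :=
  nth_count hx

lemma nonGhostPos_le (hι : Function.Injective ι) (j : ℕ) : nonGhostPos ι j ≤ j + m := by
  have hcount := count_notMem_ghosts_add_card hι (j + m + 1)
  have hcard := card_ghostsBelow_le (ι := ι) (j + m + 1)
  exact Nat.lt_add_one_iff.1 (nth_lt_of_lt_count (by omega))

lemma image_nonGhostPos_Icc {n : ℕ} (hι : Function.Injective ι) (hιn : ∀ k, ι k ≤ n + m)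
    (i : ℕ) : (Icc i n).image (nonGhostPos ι) = Icc (nonGhostPos ι i) (n + m) \ ghosts ι := by
  ext x
  simp only [mem_image, mem_Icc, mem_sdiff]
  constructor
  · rintro ⟨j, ⟨hij, hjn⟩, rfl⟩
    exact ⟨⟨nonGhostPos_strictMono.monotone hij, (nonGhostPos_le hι j).trans (by omega)⟩,
      nonGhostPos_notMem_ghosts j⟩
  · rintro ⟨⟨hix, hxn⟩, hx⟩
    refine ⟨count (· ∉ ghosts ι) x, ⟨?_, ?_⟩, nonGhostPos_count hx⟩
    · rwa [← nonGhostPos_strictMono.le_iff_le, nonGhostPos_count hx]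
    · have hall : ghostsBelow ι (n + m + 1) = univ :=
        filter_true_of_mem fun k _ => Nat.lt_add_one_iff.2 (hιn k)
      have hcount := count_notMem_ghosts_add_card hι (n + m + 1)
      rw [hall, Finset.card_fin] at hcount
      have hlt := count_strict_mono (p := (· ∉ ghosts ι)) hx (Nat.lt_add_one_iff.2 hxn)
      omega

end Ghosts

section Interface

open Nat

variable {n m : ℕ} {hm : 1 ≤ m} {ι : Fin m → ℕ} {b c : ℕ → ℤ}

lemma _root_.MPlusBitsInterface.apply_count (hι : StrictMono ι)
    (h : MPlusBitsInterface n m hm ι b c) {p : ℕ} (hp : p ∉ ghosts ι) (hp₁ : 1 ≤ p)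
    (hpn : p ≤ n + m) : c (count (· ∉ ghosts ι) p) = b p := by
  obtain ⟨h₁, h₂, h₃⟩ := h
  have hcount := count_notMem_ghosts_add_card hι.injective p
  have hlt := lt_iff_lt_card_ghostsBelow hι.monotone p
  have hne : ∀ k, ι k ≠ p := fun k hk => hp (hk ▸ mem_image_of_mem ι (mem_univ k))
  have hle := card_ghostsBelow_le (ι := ι) p
  obtain h0 | ⟨e, he⟩ : #(ghostsBelow ι p) = 0 ∨ ∃ e, #(ghostsBelow ι p) = e + 1 :=
    (Nat.eq_zero_or_eq_succ_pred _).imp id fun h => ⟨_, h⟩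
  · have hbefore := (hlt ⟨0, hm⟩).not.2 (by simp [h0])
    have := h₁ p hp₁ (lt_of_le_of_ne (not_lt.1 hbefore) (hne _).symm)
    rwa [show count (· ∉ ghosts ι) p = p by omega]
  rcases (show e + 1 ≤ m by omega).lt_or_eq with hem | hem
  · have hafter := (hlt ⟨e + 1, hem⟩).not.2 (by simp [he])
    have := h₂ e (by omega) p ((hlt ⟨e, by omega⟩).2 (by simp [he]))
      (lt_of_le_of_ne (not_lt.1 hafter) (hne _).symm)
    rwa [show count (· ∉ ghosts ι) p = p - (e + 1) by omega]
  · have := h₃ p ((hlt ⟨m - 1, by omega⟩).2 (by simp; omega)) hpn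
    rwa [show count (· ∉ ghosts ι) p = p - m by omega]

lemma _root_.MPlusBitsInterface.apply_nonGhostPos (hι : StrictMono ι)
    (h : MPlusBitsInterface n m hm ι b c) {j : ℕ} (hj₁ : 1 ≤ j) (hjn : j ≤ n) :
    c j = b (nonGhostPos ι j) := by
  have hpos : j ≤ nonGhostPos ι j := nonGhostPos_strictMono.le_apply
  have hle := nonGhostPos_le hι.injective j
  simpa only [count_nonGhostPos] using
    h.apply_count hι (nonGhostPos_notMem_ghosts j) (by omega) (by omega)

lemma feature_eq_of_mPlusBitsInterface (hι : StrictMono ι) (hb : ∀ k, b k = 0 ∨ b k = 1)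
    (hιn : ∀ k, ι k ≤ n + m) (h : MPlusBitsInterface n m hm ι b c) {i : ℕ} (hi : 1 ≤ i) :
    feature c n i = feature b (n + m) (nonGhostPos ι i) *
      ∏ g ∈ ghosts ι with g ∈ Icc (nonGhostPos ι i) (n + m), spin b g := by
  calc feature c n i = ∏ j ∈ Icc i n, spin b (nonGhostPos ι j) :=
        prod_congr rfl fun j hj => by
          rw [mem_Icc] at hj
          rw [spin, spin, h.apply_nonGhostPos hι (hi.trans hj.1) hj.2]
    _ = ∏ x ∈ (Icc i n).image (nonGhostPos ι), spin b x :=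
        (prod_image fun _ _ _ _ hxy => nonGhostPos_strictMono.injective hxy).symm
    _ = _ := by rw [image_nonGhostPos_Icc hι.injective hιn, prod_spin_Icc_sdiff hb]

end Interface

section Polynomial

variable {N : ℕ}

noncomputable def featurePoint (b : ℕ → ℤ) (N : ℕ) : Fin N → ℝ :=
  fun t => feature b N (t + 1)

-- The variable for `φ a`; beyond `N` it is `1`, the value of the empty product `φ (N + 1)`.
noncomputable def featureVar (N a : ℕ) : MvPolynomial (Fin N) ℝ :=
  if h : 1 ≤ a ∧ a ≤ N then X ⟨a - 1, by omega⟩ else 1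

lemma totalDegree_featureVar_le (N a : ℕ) : (featureVar N a).totalDegree ≤ 1 := by
  unfold featureVar
  split_ifs <;> simp

lemma eval_featureVar (b : ℕ → ℤ) {a : ℕ} (ha : 1 ≤ a) :
    eval (featurePoint b N) (featureVar N a) = feature b N a := by
  unfold featureVar
  split_ifs with h
  · simp [featurePoint, Nat.sub_add_cancel ha]
  · simp [feature, Icc_eq_empty (by omega : ¬ a ≤ N)]

noncomputable def featureMonomial (N a : ℕ) (T : Finset ℕ) : MvPolynomial (Fin N) ℝ :=
  featureVar N a * ∏ g ∈ T, featureVar N g * featureVar N (g + 1)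

lemma totalDegree_featureMonomial_le (N a : ℕ) (T : Finset ℕ) :
    (featureMonomial N a T).totalDegree ≤ 2 * #T + 1 := by
  have hpair (g : ℕ) : (featureVar N g * featureVar N (g + 1)).totalDegree ≤ 2 :=
    (totalDegree_mul _ _).trans (add_le_add (totalDegree_featureVar_le N g)
      (totalDegree_featureVar_le N (g + 1)))
  calc (featureMonomial N a T).totalDegree
      ≤ 1 + ∑ g ∈ T, (featureVar N g * featureVar N (g + 1)).totalDegree :=
        (totalDegree_mul _ _).trans
          (add_le_add (totalDegree_featureVar_le N a) (totalDegree_finsetProd _ _))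
    _ ≤ 1 + ∑ _g ∈ T, 2 := by gcongr with g; exact hpair g
    _ = 2 * #T + 1 := by rw [sum_const, smul_eq_mul]; ring

lemma eval_featureMonomial {b : ℕ → ℤ} (hb : ∀ k, b k = 0 ∨ b k = 1) {a : ℕ} {T : Finset ℕ}
    (ha : 1 ≤ a) (hT : ∀ g ∈ T, g ∈ Icc a N) :
    eval (featurePoint b N) (featureMonomial N a T) =
      ((feature b N a * ∏ g ∈ T, spin b g : ℤ) : ℝ) := by
  have hpair : ∀ g ∈ T, eval (featurePoint b N) (featureVar N g * featureVar N (g + 1)) =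
      ((spin b g : ℤ) : ℝ) := fun g hg => by
    have hg := mem_Icc.1 (hT g hg)
    rw [map_mul, eval_featureVar b (ha.trans hg.1), eval_featureVar b (by omega),
      spin_eq_feature_mul_feature hb hg.2, Int.cast_mul]
  rw [featureMonomial, map_mul, map_prod, eval_featureVar b ha, prod_congr rfl hpair]
  push_cast
  rfl

end Polynomial

noncomputable def hiddenFeaturePoly {m : ℕ} (n : ℕ) (ι : Fin m → ℕ) (i : ℕ) :
    MvPolynomial (Fin (n + m)) ℝ :=
  featureMonomial (n + m) (nonGhostPos ι i) {g ∈ ghosts ι | g ∈ Icc (nonGhostPos ι i) (n + m)}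

lemma totalDegree_hiddenFeaturePoly_le {m : ℕ} (n : ℕ) (ι : Fin m → ℕ) (i : ℕ) :
    (hiddenFeaturePoly n ι i).totalDegree ≤ 2 * m + 1 := by
  have hcard : #{g ∈ ghosts ι | g ∈ Icc (nonGhostPos ι i) (n + m)} ≤ m :=
    (card_filter_le _ _).trans (card_image_le.trans_eq (Finset.card_fin m))
  exact (totalDegree_featureMonomial_le _ _ _).trans (by omega)

lemma eval_hiddenFeaturePoly {n m : ℕ} {hm : 1 ≤ m} {ι : Fin m → ℕ} {b c : ℕ → ℤ}
    (hι : StrictMono ι) (hb : ∀ k, b k = 0 ∨ b k = 1) (hιn : ∀ k, ι k ≤ n + m)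
    (h : MPlusBitsInterface n m hm ι b c) {i : ℕ} (hi : 1 ≤ i) :
    eval (featurePoint b (n + m)) (hiddenFeaturePoly n ι i) = feature c n i := by
  rw [hiddenFeaturePoly, eval_featureMonomial hb (hi.trans nonGhostPos_strictMono.le_apply)
    fun g hg => (mem_filter.1 hg).2, feature_eq_of_mPlusBitsInterface hι hb hιn h hi]

end MPlusBits

/-- Theorem 1, upper bound form: if no two ghost positions are
consecutive, the argument of the sign function in the APUF response model is,
as a function of the observable feature vector `(φ(1), ..., φ(n+m))`, given by
a multivariate polynomial of total degree at most `2m + 1`. -/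
theorem stmt6 (n m : ℕ) (hm : 1 ≤ m)
    (ι : Fin m → ℕ) (hmono : StrictMono ι)
    (hlast : ι ⟨m - 1, by omega⟩ ≤ n + m) :
    ∀ (v : ℝ) (w : ℕ → ℝ),
      ∃ p : MvPolynomial (Fin (n + m)) ℝ,
        p.totalDegree ≤ 2 * m + 1 ∧
        ∀ (b c : ℕ → ℤ), (∀ k, b k = 0 ∨ b k = 1) →
          MPlusBitsInterface n m hm ι b c →
          v + ∑ i ∈ Finset.Icc 1 n,
              w i * ((∏ k ∈ Finset.Icc i n, (2 * c k - 1) : ℤ) : ℝ)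
            = MvPolynomial.eval
                (fun t : Fin (n + m) =>
                  ((∏ k ∈ Finset.Icc ((t : ℕ) + 1) (n + m), (2 * b k - 1) : ℤ) : ℝ))
                p := by
  intro v w
  have hιn (k : Fin m) : ι k ≤ n + m :=
    (hmono.monotone (Fin.mk_le_mk.2 (by omega) : k ≤ ⟨m - 1, by omega⟩)).trans hlast
  refine ⟨MvPolynomial.C v + ∑ i ∈ Finset.Icc 1 n, w i • MPlusBits.hiddenFeaturePoly n ι i,
    ?_, fun b c hb h => ?_⟩
  · rw [← MvPolynomial.mem_restrictTotalDegree]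
    refine add_mem ?_ (sum_mem fun i _ => Submodule.smul_mem _ _ ?_)
    · simp [MvPolynomial.mem_restrictTotalDegree]
    · exact (MvPolynomial.mem_restrictTotalDegree _ _ _).2
        (MPlusBits.totalDegree_hiddenFeaturePoly_le n ι i)
  · change _ = MvPolynomial.eval (MPlusBits.featurePoint b (n + m)) _
    rw [map_add, MvPolynomial.eval_C, map_sum]
    refine congrArg _ (Finset.sum_congr rfl fun i hi => ?_)
    rw [MvPolynomial.smul_eval,
      MPlusBits.eval_hiddenFeaturePoly hmono hb hιn h (Finset.mem_Icc.1 hi).1]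
    rfl
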